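/- The boundary value problem u'''(t) = (1/18)(u'(t))² - (1/12)u(t)u''(t) + t/2 + 11/2 on (0,1) with u(0)=u'(1)=u''(1)=0 has a unique solution u satisfying 0 ≤ u(t) ≤ 4/3, 0 ≤ u'(t) ≤ 4, -8 ≤ u''(t) ≤ 0 on [0,1]; in particular u is nonnegative and increasing. -/

import Mathlib

/-- `u` solves the ODE of Example 4.3.1 on `(0,1)` with `u(0)=u'(1)=u''(1)=0`. -/
def IsSolution (u : ℝ → ℝ) : Prop :=
  ContDiff ℝ 2 u ∧
  (∀ t ∈ Set.Ioo (0:ℝ) 1,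
    HasDerivAt (deriv (deriv u))
      ((1 / 18) * (deriv u t) ^ 2 - (1 / 12) * u t * deriv (deriv u) t +
        t / 2 + 11 / 2) t) ∧
  u 0 = 0 ∧ deriv u 1 = 0 ∧ deriv (deriv u) 1 = 0

/-- bounds of Example 4.3.1. -/
def InBounds (u : ℝ → ℝ) : Prop :=
  ∀ t ∈ Set.Icc (0:ℝ) 1,
    u t ∈ Set.Icc 0 (4 / 3 : ℝ) ∧ deriv u t ∈ Set.Icc 0 (4 : ℝ) ∧
      deriv (deriv u) t ∈ Set.Icc (-8 : ℝ) 0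

/-!
The solution is `1 - (1 - t) ^ 3`, for which the right-hand side is constantly `6`. For uniqueness
let `w = v - u` for two solutions in the box and `C = max |w''|` on `[0, 1]`. The boundary
conditions give `|w'(s)| ≤ (1 - s) C` and `|w(s)| ≤ C / 2`, and on the box the right-hand side is
Lipschitz in `(u, u', u'')` with constants `2/3, 4/9, 1/9`, so `|w'''| ≤ 8/9 C`. Integrating `w'''`
back from `1`, where `w''` vanishes, gives `C ≤ 8/9 C`, hence `C = 0` and `w = 0`.
-/

open Set

-- `IsSolution u` says `u''' t = odeRhs t (u t) (u' t) (u'' t)` after unfolding.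
noncomputable def odeRhs (t x y z : ℝ) : ℝ := 1 / 18 * y ^ 2 - 1 / 12 * x * z + t / 2 + 11 / 2

lemma abs_odeRhs_sub_odeRhs_le (t : ℝ) {x₁ y₁ z₁ x₂ y₂ z₂ : ℝ} (hx₁ : |x₁| ≤ 4 / 3)
    (hy : |y₁ + y₂| ≤ 8) (hz₂ : |z₂| ≤ 8) :
    |odeRhs t x₁ y₁ z₁ - odeRhs t x₂ y₂ z₂| ≤
      2 / 3 * |x₁ - x₂| + 4 / 9 * |y₁ - y₂| + 1 / 9 * |z₁ - z₂| := by
  have hsplit : odeRhs t x₁ y₁ z₁ - odeRhs t x₂ y₂ z₂ =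
      1 / 18 * ((y₁ + y₂) * (y₁ - y₂)) - 1 / 12 * (x₁ * (z₁ - z₂)) -
        1 / 12 * ((x₁ - x₂) * z₂) := by
    unfold odeRhs; ring
  have hY : |(y₁ + y₂) * (y₁ - y₂)| ≤ 8 * |y₁ - y₂| := by rw [abs_mul]; gcongr
  have hZ : |x₁ * (z₁ - z₂)| ≤ 4 / 3 * |z₁ - z₂| := by rw [abs_mul]; gcongr
  have hX : |(x₁ - x₂) * z₂| ≤ 8 * |x₁ - x₂| := by rw [abs_mul, mul_comm 8]; gcongr
  obtain ⟨hY₁, hY₂⟩ := abs_le.mp hY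
  obtain ⟨hZ₁, hZ₂⟩ := abs_le.mp hZ
  obtain ⟨hX₁, hX₂⟩ := abs_le.mp hX
  rw [hsplit, abs_le]
  constructor <;> linarith

lemma abs_le_mul_sub_of_hasDerivAt {f f' : ℝ → ℝ} {a b C : ℝ}
    (hf : ContinuousOn f (Icc a b)) (hf' : ∀ x ∈ Ioo a b, HasDerivAt f (f' x) x)
    (hb : f b = 0) (bound : ∀ x ∈ Ioo a b, |f' x| ≤ C) {s : ℝ} (hs : s ∈ Icc a b) :
    |f s| ≤ (b - s) * C := by
  rcases hs.2.eq_or_lt with rfl | hsb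
  · simp [hb]
  obtain ⟨c, hc, hslope⟩ := exists_hasDerivAt_eq_slope f f' hsb
    (hf.mono (Icc_subset_Icc_left hs.1))
    (fun x hx => hf' x ⟨hs.1.trans_lt hx.1, hx.2⟩)
  have hfs : f s = -((b - s) * f' c) := by
    rw [hslope, hb]; field_simp [(sub_pos.mpr hsb).ne']; ring
  rw [hfs, abs_neg, abs_mul, abs_of_pos (sub_pos.mpr hsb)]
  exact mul_le_mul_of_nonneg_left (bound c ⟨hs.1.trans_lt hc.1, hc.2⟩) (sub_pos.mpr hsb).le

lemma abs_le_half_of_abs_deriv_le_mul_one_sub {f f' : ℝ → ℝ} {C : ℝ}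
    (hf : ∀ x, HasDerivAt f (f' x) x) (h0 : f 0 = 0)
    (bound : ∀ x ∈ Icc (0 : ℝ) 1, |f' x| ≤ (1 - x) * C) {s : ℝ} (hs : s ∈ Icc (0 : ℝ) 1) :
    |f s| ≤ C / 2 := by
  have hC : 0 ≤ C := by simpa using (abs_nonneg _).trans (bound 0 ⟨le_rfl, zero_le_one⟩)
  have hB : ∀ x, HasDerivAt (fun x => C * (x - x ^ 2 / 2)) ((1 - x) * C) x := fun x =>
    (((hasDerivAt_id x).sub ((hasDerivAt_pow 2 x).div_const 2)).const_mul C).congr_deriv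
      (by simp; ring)
  have hfence := image_norm_le_of_norm_deriv_right_le_deriv_boundary
    (fun x _ => (hf x).continuousAt.continuousWithinAt) (fun x _ => (hf x).hasDerivWithinAt)
    (by simp [h0]) hB (fun x hx => bound x (Ico_subset_Icc_self hx)) hs
  have : C * (s - s ^ 2 / 2) ≤ C / 2 := by nlinarith [mul_nonneg hC (sq_nonneg (1 - s))]
  exact hfence.trans this

theorem eqOn_zero_of_abs_deriv_three_le {w w₁ w₂ g : ℝ → ℝ} {L₀ L₁ L₂ : ℝ}
    (hL₀ : 0 ≤ L₀) (hL₁ : 0 ≤ L₁) (hL₂ : 0 ≤ L₂) (hL : L₀ / 2 + L₁ + L₂ < 1)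
    (hw : ∀ x, HasDerivAt w (w₁ x) x) (hw₁ : ∀ x, HasDerivAt w₁ (w₂ x) x)
    (hw₂c : Continuous w₂) (hw₂ : ∀ x ∈ Ioo (0 : ℝ) 1, HasDerivAt w₂ (g x) x)
    (h0 : w 0 = 0) (h1 : w₁ 1 = 0) (h2 : w₂ 1 = 0)
    (hg : ∀ x ∈ Ioo (0 : ℝ) 1, |g x| ≤ L₀ * |w x| + L₁ * |w₁ x| + L₂ * |w₂ x|) :
    EqOn w 0 (Icc 0 1) := by
  obtain ⟨t₀, ht₀, hmax⟩ := isCompact_Icc.exists_isMaxOn (nonempty_Icc.mpr zero_le_one)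
    hw₂c.abs.continuousOn
  set C := |w₂ t₀|
  have hC : 0 ≤ C := abs_nonneg _
  have hw₂_le : ∀ x ∈ Icc (0 : ℝ) 1, |w₂ x| ≤ C := fun x hx => hmax hx
  have hw₁_le : ∀ x ∈ Icc (0 : ℝ) 1, |w₁ x| ≤ (1 - x) * C := fun x hx =>
    abs_le_mul_sub_of_hasDerivAt (fun y _ => (hw₁ y).continuousAt.continuousWithinAt)
      (fun y _ => hw₁ y) h1 (fun y hy => hw₂_le y (Ioo_subset_Icc_self hy)) hx
  have hw_le : ∀ x ∈ Icc (0 : ℝ) 1, |w x| ≤ C / 2 := fun x hx =>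
    abs_le_half_of_abs_deriv_le_mul_one_sub hw h0 hw₁_le hx
  have hg_le : ∀ x ∈ Ioo (0 : ℝ) 1, |g x| ≤ (L₀ / 2 + L₁ + L₂) * C := fun x hx => by
    have hx' := Ioo_subset_Icc_self hx
    have h₁ : |w₁ x| ≤ C := (hw₁_le x hx').trans (by nlinarith [hx.1])
    calc |g x| ≤ L₀ * |w x| + L₁ * |w₁ x| + L₂ * |w₂ x| := hg x hx
      _ ≤ L₀ * (C / 2) + L₁ * C + L₂ * C := by
        gcongr
        exacts [hw_le x hx', hw₂_le x hx']
      _ = (L₀ / 2 + L₁ + L₂) * C := by ring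
  have hC_le : C ≤ (1 - t₀) * ((L₀ / 2 + L₁ + L₂) * C) :=
    abs_le_mul_sub_of_hasDerivAt hw₂c.continuousOn hw₂ h2 hg_le ht₀
  have hC0 : C = 0 := by nlinarith [ht₀.1, mul_nonneg hC ht₀.1]
  intro x hx
  simpa [hC0] using hw_le x hx

lemma differentiable_and_continuous_deriv_deriv {u : ℝ → ℝ} (h : ContDiff ℝ 2 u) :
    Differentiable ℝ u ∧ Differentiable ℝ (deriv u) ∧ Continuous (deriv (deriv u)) := by
  have h' : ContDiff ℝ 1 (deriv u) := (contDiff_succ_iff_deriv (n := 1)).mp h |>.2.2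
  exact ⟨h.differentiable (by norm_num), h'.differentiable one_ne_zero, h'.continuous_deriv le_rfl⟩

theorem IsSolution.eqOn {u v : ℝ → ℝ} (hv : IsSolution v) (hvb : InBounds v)
    (hu : IsSolution u) (hub : InBounds u) : EqOn v u (Icc 0 1) := by
  obtain ⟨hu₀, hu₁, hu₂⟩ := differentiable_and_continuous_deriv_deriv hu.1
  obtain ⟨hv₀, hv₁, hv₂⟩ := differentiable_and_continuous_deriv_deriv hv.1
  have hzero := eqOn_zero_of_abs_deriv_three_le (w := v - u)
    (w₁ := deriv v - deriv u) (w₂ := deriv (deriv v) - deriv (deriv u))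
    (g := fun t => odeRhs t (v t) (deriv v t) (deriv (deriv v) t) -
      odeRhs t (u t) (deriv u t) (deriv (deriv u) t))
    (L₀ := 2 / 3) (L₁ := 4 / 9) (L₂ := 1 / 9) (by norm_num) (by norm_num) (by norm_num)
    (by norm_num) (fun x => (hv₀ x).hasDerivAt.sub (hu₀ x).hasDerivAt)
    (fun x => (hv₁ x).hasDerivAt.sub (hu₁ x).hasDerivAt) (hv₂.sub hu₂)
    (fun x hx => (hv.2.1 x hx).sub (hu.2.1 x hx))
    (by simp [hu.2.2.1, hv.2.2.1]) (by simp [hu.2.2.2.1, hv.2.2.2.1])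
    (by simp [hu.2.2.2.2, hv.2.2.2.2]) ?_
  · exact fun x hx => sub_eq_zero.mp (hzero hx)
  intro x hx
  obtain ⟨⟨hv0, hv0'⟩, ⟨hv1, hv1'⟩, -⟩ := hvb x (Ioo_subset_Icc_self hx)
  obtain ⟨-, ⟨hu1, hu1'⟩, ⟨hu2, hu2'⟩⟩ := hub x (Ioo_subset_Icc_self hx)
  exact abs_odeRhs_sub_odeRhs_le x (abs_le.mpr ⟨by linarith, hv0'⟩)
    (abs_le.mpr ⟨by linarith, by linarith⟩) (abs_le.mpr ⟨hu2, by linarith⟩)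

def cubicSolution (t : ℝ) : ℝ := 1 - (1 - t) ^ 3

lemma hasDerivAt_cubicSolution (t : ℝ) : HasDerivAt cubicSolution (3 * (1 - t) ^ 2) t :=
  ((((hasDerivAt_id t).const_sub 1).pow 3).const_sub 1).congr_deriv (by simp)

lemma hasDerivAt_three_mul_one_sub_sq (t : ℝ) :
    HasDerivAt (fun s => 3 * (1 - s) ^ 2) (-(6 * (1 - t))) t :=
  ((((hasDerivAt_id t).const_sub 1).pow 2).const_mul 3).congr_deriv (by simp; ring)

lemma hasDerivAt_neg_six_mul_one_sub (t : ℝ) : HasDerivAt (fun s => -(6 * (1 - s))) 6 t :=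
  ((((hasDerivAt_id t).const_sub 1).const_mul 6).neg).congr_deriv (by simp)

lemma deriv_cubicSolution : deriv cubicSolution = fun t => 3 * (1 - t) ^ 2 :=
  funext fun t => (hasDerivAt_cubicSolution t).deriv

lemma deriv_deriv_cubicSolution : deriv (deriv cubicSolution) = fun t => -(6 * (1 - t)) := by
  rw [deriv_cubicSolution]
  exact funext fun t => (hasDerivAt_three_mul_one_sub_sq t).deriv

lemma isSolution_cubicSolution : IsSolution cubicSolution := by
  refine ⟨by unfold cubicSolution; fun_prop, fun t _ => ?_, by simp [cubicSolution],
    by simp [deriv_cubicSolution], by simp [deriv_deriv_cubicSolution]⟩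
  convert hasDerivAt_neg_six_mul_one_sub t using 1
  · exact deriv_deriv_cubicSolution
  · rw [deriv_deriv_cubicSolution, deriv_cubicSolution]; simp only [cubicSolution]; ring

lemma inBounds_cubicSolution : InBounds cubicSolution := by
  rintro t ⟨ht₀, ht₁⟩
  rw [deriv_deriv_cubicSolution, deriv_cubicSolution]
  have hc : 0 ≤ (1 - t) ^ 3 := pow_nonneg (by linarith) 3
  have hc' : (1 - t) ^ 3 ≤ 1 := pow_le_one₀ (by linarith) (by linarith)
  have hs : (1 - t) ^ 2 ≤ 1 := pow_le_one₀ (by linarith) (by linarith)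
  refine ⟨⟨?_, ?_⟩, ⟨?_, ?_⟩, ?_, ?_⟩ <;> simp only [cubicSolution] <;> nlinarith

lemma monotone_cubicSolution : Monotone cubicSolution := fun _ _ hxy =>
  sub_le_sub_left ((Odd.strictMono_pow (by decide)).monotone (sub_le_sub_left hxy 1)) 1

theorem example_431 :
    ∃ u : ℝ → ℝ, (IsSolution u ∧ InBounds u ∧
      (∀ t ∈ Set.Icc (0:ℝ) 1, 0 ≤ u t) ∧ MonotoneOn u (Set.Icc (0:ℝ) 1)) ∧
      ∀ v : ℝ → ℝ, IsSolution v ∧ InBounds v → ∀ t ∈ Set.Icc (0:ℝ) 1, v t = u t :=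
  ⟨cubicSolution, ⟨isSolution_cubicSolution, inBounds_cubicSolution,
    fun t ht => (inBounds_cubicSolution t ht).1.1, monotone_cubicSolution.monotoneOn _⟩,
    fun _ hv => hv.1.eqOn hv.2 isSolution_cubicSolution inBounds_cubicSolution⟩
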